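/- Let f₊(t) = a₃⁺t³ + a₂⁺t² + a₁⁺t + a₀⁺ and f₋(t) = a₃⁻t³ + a₂⁻t² + a₁⁻t + a₀⁻ with a₃⁺ > 0, a₃⁺ > a₃⁻, and 3(a₃⁺ − a₃⁻)(a₁⁺ − a₁⁻) > (a₂⁺ − a₂⁻)². Set ε₀⁺ = √( (1/(12a₃⁺))·[a₁⁺ − a₁⁻ − (a₂⁺ − a₂⁻)²/(3(a₃⁺ − a₃⁻))] ) and u₀⁺ = ε₀⁺ − (a₂⁺ − a₂⁻)/(3(a₃⁺ − a₃⁻)). Then for every ε > ε₀⁺ and every real u, the equation f₊'(u+ε) − f₋'(u−ε) − 2ε·f₊''(u+ε) = 0 holds if and only if u = u₀⁺ + (ε − ε₀⁺) + 2√( a₃⁺(ε² − (ε₀⁺)²)/(a₃⁺ − a₃⁻) ) or u = u₀⁺ + (ε − ε₀⁺) − 2√( a₃⁺(ε² − (ε₀⁺)²)/(a₃⁺ − a₃⁻) ). -/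

import Mathlib

lemma deriv_cubic (a b c d : ℝ) :
    deriv (fun t : ℝ => a * t ^ 3 + b * t ^ 2 + c * t + d) =
      fun t => 3 * a * t ^ 2 + 2 * b * t + c := by
  funext t
  have h1 : HasDerivAt (fun t : ℝ => a * t ^ 3 + b * t ^ 2 + c * t + d)
      (3 * a * t ^ 2 + 2 * b * t + c) t := by
    have := (((hasDerivAt_pow 3 t).const_mul a).add
      ((hasDerivAt_pow 2 t).const_mul b)).add
      (((hasDerivAt_id t).const_mul c).add_const d)
    convert this using 1
    · rfl
    · rfl
    · funext x; simp [id]; ring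
    · push_cast; ring
  exact h1.deriv

lemma deriv_quad (a b c : ℝ) :
    deriv (fun t : ℝ => a * t ^ 2 + b * t + c) = fun t => 2 * a * t + b := by
  funext t
  have h1 : HasDerivAt (fun t : ℝ => a * t ^ 2 + b * t + c)
      (2 * a * t + b) t := by
    have := ((hasDerivAt_pow 2 t).const_mul a).add
      (((hasDerivAt_id t).const_mul b).add_const c)
    convert this using 1
    · rfl
    · rfl
    · funext x; simp [id]; ring
    · push_cast; ring
  exact h1.deriv

/-- for `ε > ε₀⁺` the equation `D₊(u,ε) = 0` holds exactly at
the two roots `u₊ˡ, u₊ʳ = u₀⁺ + (ε − ε₀⁺) ∓ 2√(a₃⁺(ε² − (ε₀⁺)²)/(a₃⁺ − a₃⁻))`. -/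
theorem stmt_10 (a3p a2p a1p a0p a3m a2m a1m a0m : ℝ)
    (fp fm : ℝ → ℝ)
    (hfp : fp = fun t => a3p * t ^ 3 + a2p * t ^ 2 + a1p * t + a0p)
    (hfm : fm = fun t => a3m * t ^ 3 + a2m * t ^ 2 + a1m * t + a0m)
    (ha3p : 0 < a3p) (ha : a3m < a3p)
    (hdisc : (a2p - a2m) ^ 2 < 3 * (a3p - a3m) * (a1p - a1m))
    (ε₀p u₀p : ℝ)
    (hε₀p : ε₀p = Real.sqrt ((1 / (12 * a3p)) *
      (a1p - a1m - (a2p - a2m) ^ 2 / (3 * (a3p - a3m)))))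
    (hu₀p : u₀p = ε₀p - (a2p - a2m) / (3 * (a3p - a3m))) :
    ∀ ε u : ℝ, ε₀p < ε →
      (deriv fp (u + ε) - deriv fm (u - ε) -
          2 * ε * deriv (deriv fp) (u + ε) = 0 ↔
        u = u₀p + (ε - ε₀p) +
            2 * Real.sqrt (a3p * (ε ^ 2 - ε₀p ^ 2) / (a3p - a3m)) ∨
        u = u₀p + (ε - ε₀p) -
            2 * Real.sqrt (a3p * (ε ^ 2 - ε₀p ^ 2) / (a3p - a3m))) := by
  intro ε u hε
  have h3 : (0:ℝ) < a3p - a3m := by linarith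
  have h3' : a3p - a3m ≠ 0 := ne_of_gt h3
  have hargnn : 0 ≤ (1 / (12 * a3p)) *
      (a1p - a1m - (a2p - a2m) ^ 2 / (3 * (a3p - a3m))) := by
    apply mul_nonneg
    · positivity
    · rw [sub_nonneg, div_le_iff₀ (by linarith)]
      nlinarith
  have hE2 : ε₀p ^ 2 = (1 / (12 * a3p)) *
      (a1p - a1m - (a2p - a2m) ^ 2 / (3 * (a3p - a3m))) := by
    rw [hε₀p, Real.sq_sqrt hargnn]
  have hE2' : ε₀p ^ 2 * (12 * a3p) =
      (a1p - a1m) - (a2p - a2m) * ((a2p - a2m) / (3 * (a3p - a3m))) := by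
    rw [hE2]; field_simp
  have hε₀nn : 0 ≤ ε₀p := hε₀p ▸ Real.sqrt_nonneg _
  have hεε : ε₀p ^ 2 ≤ ε ^ 2 := by nlinarith
  have hSnn : 0 ≤ a3p * (ε ^ 2 - ε₀p ^ 2) / (a3p - a3m) := by
    apply div_nonneg _ (le_of_lt h3)
    nlinarith
  set S := Real.sqrt (a3p * (ε ^ 2 - ε₀p ^ 2) / (a3p - a3m)) with hS
  have hS2 : S ^ 2 = a3p * (ε ^ 2 - ε₀p ^ 2) / (a3p - a3m) :=
    Real.sq_sqrt hSnn
  have hS2' : S ^ 2 * (a3p - a3m) = a3p * (ε ^ 2 - ε₀p ^ 2) := by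
    rw [hS2]; field_simp
  have hc' : 3 * (a3p - a3m) * ((a2p - a2m) / (3 * (a3p - a3m))) =
      a2p - a2m := by field_simp
  subst hfp hfm
  rw [deriv_cubic, deriv_cubic, deriv_quad]
  have key : 3 * a3p * (u + ε) ^ 2 + 2 * a2p * (u + ε) + a1p -
      (3 * a3m * (u - ε) ^ 2 + 2 * a2m * (u - ε) + a1m) -
      2 * ε * (2 * (3 * a3p) * (u + ε) + 2 * a2p) =
      3 * (a3p - a3m) *
        ((u - (u₀p + (ε - ε₀p) + 2 * S)) * (u - (u₀p + (ε - ε₀p) - 2 * S))) := by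
    rw [hu₀p]
    linear_combination 12 * hS2' - hE2' +
      (-2 * u + 2 * ε - (a2p - a2m) / (3 * (a3p - a3m))) * hc'
  have h30 : ¬ (3 * (a3p - a3m) = 0) := by positivity
  rw [key, mul_eq_zero, or_iff_right h30, mul_eq_zero, sub_eq_zero, sub_eq_zero]
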